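/- arXiv:1204.6154 — 4 statements merged into one kernel-verified Lean document; each statement's English description precedes it below -/
import Mathlib

section
/- For a commutative ring R, the set of all valuations on R which are nonnegative on R (i.e. centered in R), endowed with the topology of pointwise convergence as a subspace of [0,∞]^R, is a compact topological space. -/
/-- The space of valuations on a commutative ring `R` which are nonnegative on `R`
(valuations centered in `R`, with values in `[0,∞]`), as a subspace of the product
space `[0,∞]^R` with the topology of pointwise convergence, is compact. -/
theorem nonnegValuations_isCompact {R : Type*} [CommRing R] :
    IsCompact {w : R → ENNReal |
      (∀ f g : R, w (f * g) = w f + w g) ∧ w 0 = ⊤ ∧ w 1 = 0 ∧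
      ∀ f g : R, min (w f) (w g) ≤ w (f + g)} := by
  apply IsClosed.isCompact
  have hc : ∀ f : R, Continuous fun w : R → ENNReal => w f := fun f => continuous_apply f
  have hset : {w : R → ENNReal |
      (∀ f g : R, w (f * g) = w f + w g) ∧ w 0 = ⊤ ∧ w 1 = 0 ∧
      ∀ f g : R, min (w f) (w g) ≤ w (f + g)} =
      (⋂ f : R, ⋂ g : R, {w : R → ENNReal | w (f * g) = w f + w g}) ∩
      ({w : R → ENNReal | w 0 = ⊤} ∩ ({w : R → ENNReal | w 1 = 0} ∩
      ⋂ f : R, ⋂ g : R, {w : R → ENNReal | min (w f) (w g) ≤ w (f + g)})) := by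
    ext w
    simp only [Set.mem_setOf_eq, Set.mem_inter_iff, Set.mem_iInter]
  rw [hset]
  refine IsClosed.inter ?_ (IsClosed.inter ?_ (IsClosed.inter ?_ ?_))
  · exact isClosed_iInter fun f => isClosed_iInter fun g =>
      isClosed_eq (hc (f * g)) ((hc f).add (hc g))
  · exact isClosed_eq (hc 0) continuous_const
  · exact isClosed_eq (hc 1) continuous_const
  · exact isClosed_iInter fun f => isClosed_iInter fun g =>
      isClosed_le ((hc f).min (hc g)) (hc (f + g))
end

section
/- Let (R, 𝔪) be a Noetherian local ring and w a valuation on R which is nonnegative on R and strictly positive on 𝔪. Then w is continuous with respect to the 𝔪-adic topology on R (with ℝ ∪ {∞} given its order topology), and hence extends uniquely by continuity to a valuation on the 𝔪-adic completion of R. -/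
/-!
Since `𝔪` is finitely generated and `w` is positive on its generators, `w ≥ δ > 0` on `𝔪`, hence
`w ≥ n δ` on `𝔪 ^ n`. By the ultrametric inequality `min (w a) (n δ)` then depends only on `a`
modulo `𝔪 ^ n`. This gives continuity at once. On the completion it forces every extension `ŵ`
to satisfy `min (ŵ x) (n δ) = min (w xₙ) (n δ)` for any `xₙ ∈ R` lifting the image of `x` in
`R ⧸ 𝔪 ^ n`, so `ŵ x = ⨆ n, min (w xₙ) (n δ)`; conversely this formula defines a valuation on the
completion extending `w`.
-/

open scoped ENNReal

namespace AddValuation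

section CanonicallyOrdered

variable {A Γ : Type*} [CommRing A] [LinearOrderedAddCommMonoidWithTop Γ] [CanonicallyOrderedAdd Γ]
  (v : AddValuation A Γ)

theorem le_of_mem_span {S : Set A} {c : Γ} (hS : ∀ s ∈ S, c ≤ v s) {x : A}
    (hx : x ∈ Ideal.span S) : c ≤ v x := by
  induction hx using Submodule.span_induction with
  | mem s hs => exact hS s hs
  | zero => simp
  | add x y _ _ hx hy => exact v.map_le_add hx hy
  | smul a x _ hx => rw [smul_eq_mul, v.map_mul]; exact le_add_left hx

theorem le_of_mem_map {B : Type*} [CommRing B] (f : B →+* A) {J : Ideal B} {c : Γ}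
    (hJ : ∀ x ∈ J, c ≤ v (f x)) {y : A} (hy : y ∈ J.map f) : c ≤ v y :=
  v.le_of_mem_span (by rintro _ ⟨x, hx, rfl⟩; exact hJ x hx) hy

theorem nsmul_le_of_mem_pow {J : Ideal A} {c : Γ} (hJ : ∀ x ∈ J, c ≤ v x) (n : ℕ) {x : A}
    (hx : x ∈ J ^ n) : n • c ≤ v x := by
  induction n generalizing x with
  | zero => simp
  | succ n ih =>
    rw [pow_succ] at hx
    refine Submodule.mul_induction_on hx (fun x hx y hy => ?_) (fun x y => v.map_le_add)
    rw [v.map_mul, succ_nsmul]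
    exact add_le_add (ih hx) (hJ y hy)

end CanonicallyOrdered

section Ultrametric

variable {A Γ : Type*} [CommRing A] [LinearOrderedAddCommMonoidWithTop Γ] (v : AddValuation A Γ)

theorem min_le_of_le_map_sub {a b : A} {c : Γ} (h : c ≤ v (a - b)) : min (v a) c ≤ v b :=
  calc min (v a) c ≤ min (v a) (v (a - b)) := min_le_min_left _ h
    _ ≤ v (a - (a - b)) := v.map_sub a (a - b)
    _ = v b := by rw [sub_sub_cancel]

theorem min_eq_min_of_le_map_sub {a b : A} {c : Γ} (h : c ≤ v (a - b)) :
    min (v a) c = min (v b) c :=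
  le_antisymm (le_min (v.min_le_of_le_map_sub h) (min_le_right _ _))
    (le_min (v.min_le_of_le_map_sub (by rwa [map_sub_swap])) (min_le_right _ _))

end Ultrametric

section ENNReal

variable {R : Type*} [CommRing R] (v : AddValuation R ℝ≥0∞)

theorem exists_pos_le_of_fg {J : Ideal R} (hJ : J.FG) (hpos : ∀ x ∈ J, 0 < v x) :
    ∃ δ > 0, ∀ x ∈ J, δ ≤ v x := by
  obtain ⟨T, rfl⟩ := hJ
  exact ⟨T.inf v, (Finset.lt_inf_iff ENNReal.zero_lt_top).2 fun t ht =>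
    hpos t (Ideal.subset_span ht), fun x hx => v.le_of_mem_span (fun t => Finset.inf_le) hx⟩

variable {I : Ideal R} {δ : ℝ≥0∞}

theorem natCast_mul_le_of_mem_pow (hI : ∀ x ∈ I, δ ≤ v x) (n : ℕ) {x : R} (hx : x ∈ I ^ n) :
    n * δ ≤ v x := by
  simpa only [nsmul_eq_mul] using v.nsmul_le_of_mem_pow hI n hx

theorem continuous_adicTopology (hδ : δ ≠ 0) (hI : ∀ x ∈ I, δ ≤ v x) :
    @Continuous R ℝ≥0∞ I.adicTopology _ v := by
  let := I.adicTopology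
  refine continuous_iff_continuousAt.2 fun x => tendsto_order.2 ⟨fun a ha => ?_, fun b hb => ?_⟩
  · obtain ⟨n, hn⟩ := ENNReal.exists_nat_mul_gt hδ ha.ne_top
    refine (I.hasBasis_nhds_adic x).eventually_iff.2 ⟨n, trivial, ?_⟩
    rintro _ ⟨g, hg, rfl⟩
    exact v.map_lt_add ha (hn.trans_le (v.natCast_mul_le_of_mem_pow hI n hg))
  · obtain ⟨n, hn⟩ := ENNReal.exists_nat_mul_gt hδ hb.ne_top
    refine (I.hasBasis_nhds_adic x).eventually_iff.2 ⟨n, trivial, ?_⟩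
    rintro _ ⟨g, hg, rfl⟩
    rwa [v.map_add_eq_of_lt_left (hn.trans_le (v.natCast_mul_le_of_mem_pow hI n hg))]

end ENNReal

end AddValuation

theorem ENNReal.min_add_eq_min_min_add_min (a b c : ℝ≥0∞) :
    min (a + b) c = min (min a c + min b c) c := by
  rcases le_total a c with ha | ha <;> rcases le_total b c with hb | hb <;>
    simp [ha, hb, le_add_right, le_add_left]

theorem ENNReal.iSup_natCast_mul {δ : ℝ≥0∞} (hδ : δ ≠ 0) : ⨆ n : ℕ, (n : ℝ≥0∞) * δ = ⊤ :=
  iSup_eq_top.2 fun _ hb => ENNReal.exists_nat_mul_gt hδ hb.ne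

theorem ENNReal.iSup_min_natCast_mul {δ : ℝ≥0∞} (hδ : δ ≠ 0) {f : ℕ → ℝ≥0∞} (hf : Monotone f) :
    ⨆ n : ℕ, min (f n) (n * δ) = ⨆ n, f n := by
  rw [iSup_inf_of_monotone hf fun m n h => by gcongr, ENNReal.iSup_natCast_mul hδ, inf_top_eq]

namespace AdicCompletion

variable {R : Type*} [CommRing R] {I : Ideal R}

theorem factorPow_evalₐ {m n : ℕ} (h : m ≤ n) (x : AdicCompletion I R) :
    Ideal.Quotient.factorPow I h (evalₐ I n x) = evalₐ I m x := by
  obtain ⟨a, rfl⟩ := mk_surjective I R x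
  have hcauchy := a.property h
  rw [SModEq.sub_mem, smul_eq_mul, Ideal.mul_top] at hcauchy
  rw [evalₐ_mk, evalₐ_mk, Ideal.Quotient.factorPow, Ideal.Quotient.factor_mk, Ideal.Quotient.eq,
    ← neg_sub, neg_mem_iff]
  exact hcauchy

theorem evalₐ_algebraMap (n : ℕ) (r : R) :
    evalₐ I n (algebraMap R (AdicCompletion I R) r) = Ideal.Quotient.mk (I ^ n) r :=
  (evalₐ I n).commutes r

theorem mem_map_pow_of_evalₐ_eq_zero (hI : I.FG) {n : ℕ} {x : AdicCompletion I R}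
    (hx : evalₐ I n x = 0) : x ∈ (I ^ n).map (algebraMap R (AdicCompletion I R)) := by
  have hker : x ∈ (I ^ n • ⊤ : Submodule R (AdicCompletion I R)) := by
    rw [pow_smul_top_eq_ker_eval hI, LinearMap.mem_ker, ← factor_evalₐ_eq_eval I x (by simp), hx,
      _root_.map_zero]
  rwa [Ideal.smul_top_eq_map] at hker

noncomputable def approx (x : AdicCompletion I R) (n : ℕ) : R :=
  Function.surjInv Ideal.Quotient.mk_surjective (evalₐ I n x)

theorem mk_approx (x : AdicCompletion I R) (n : ℕ) :
    Ideal.Quotient.mk (I ^ n) (x.approx n) = evalₐ I n x :=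
  Function.surjInv_eq _ _

theorem sub_algebraMap_approx_mem (hI : I.FG) (x : AdicCompletion I R) (n : ℕ) :
    x - algebraMap R _ (x.approx n) ∈ (I ^ n).map (algebraMap R (AdicCompletion I R)) :=
  mem_map_pow_of_evalₐ_eq_zero hI (by rw [map_sub, evalₐ_algebraMap, mk_approx, sub_self])

section Extension

variable (v : AddValuation R ℝ≥0∞) (δ : ℝ≥0∞)

noncomputable def truncatedVal (n : ℕ) (x : AdicCompletion I R) : ℝ≥0∞ :=
  min (v (x.approx n)) (n * δ)

noncomputable def extendVal (x : AdicCompletion I R) : ℝ≥0∞ :=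
  ⨆ n, truncatedVal v δ n x

variable {v δ}

theorem truncatedVal_eq (hI : ∀ y ∈ I, δ ≤ v y) {n : ℕ} {x : AdicCompletion I R} {r : R}
    (hr : Ideal.Quotient.mk (I ^ n) r = evalₐ I n x) : truncatedVal v δ n x = min (v r) (n * δ) :=
  v.min_eq_min_of_le_map_sub <|
    v.natCast_mul_le_of_mem_pow hI n (Ideal.Quotient.eq.1 (by rw [mk_approx, hr]))

theorem truncatedVal_mono (hI : ∀ y ∈ I, δ ≤ v y) (x : AdicCompletion I R) :
    Monotone (truncatedVal v δ · x) := fun m n h => by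
  change truncatedVal v δ m x ≤ truncatedVal v δ n x
  rw [truncatedVal_eq hI (r := x.approx n) (by rw [← factorPow_evalₐ h, ← mk_approx]; rfl)]
  exact min_le_min_left _ (by gcongr)

theorem extendVal_algebraMap (hδ : δ ≠ 0) (hI : ∀ y ∈ I, δ ≤ v y) (r : R) :
    extendVal v δ (algebraMap R (AdicCompletion I R) r) = v r := by
  simp only [extendVal, truncatedVal_eq hI (evalₐ_algebraMap _ r).symm]
  rw [ENNReal.iSup_min_natCast_mul hδ monotone_const, iSup_const]

theorem extendVal_add (hI : ∀ y ∈ I, δ ≤ v y) (x y : AdicCompletion I R) :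
    min (extendVal v δ x) (extendVal v δ y) ≤ extendVal v δ (x + y) := by
  refine (iSup_inf_of_monotone (truncatedVal_mono hI x) (truncatedVal_mono hI y)).ge.trans
    (iSup_mono fun n => ?_)
  rw [truncatedVal_eq hI (x := x + y) (r := x.approx n + y.approx n)
    (by rw [map_add, map_add, mk_approx, mk_approx])]
  exact (inf_inf_distrib_right _ _ _).symm.le.trans (min_le_min_right _ (v.map_add _ _))

theorem extendVal_mul (hδ : δ ≠ 0) (hI : ∀ y ∈ I, δ ≤ v y) (x y : AdicCompletion I R) :
    extendVal v δ (x * y) = extendVal v δ x + extendVal v δ y := by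
  have h (n : ℕ) : truncatedVal v δ n (x * y) =
      min (truncatedVal v δ n x + truncatedVal v δ n y) (n * δ) := by
    rw [truncatedVal_eq hI (x := x * y) (r := x.approx n * y.approx n)
      (by rw [map_mul, map_mul, mk_approx, mk_approx]), v.map_mul,
      ENNReal.min_add_eq_min_min_add_min, truncatedVal, truncatedVal]
  have hmono := (truncatedVal_mono hI x).add (truncatedVal_mono hI y)
  simp only [extendVal, h, ENNReal.iSup_min_natCast_mul hδ hmono,
    ENNReal.iSup_add_iSup_of_monotone (truncatedVal_mono hI x) (truncatedVal_mono hI y)]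

variable (v) in
noncomputable def extendValuation (hδ : δ ≠ 0) (hI : ∀ y ∈ I, δ ≤ v y) :
    AddValuation (AdicCompletion I R) ℝ≥0∞ :=
  .of (extendVal v δ) (by simpa using extendVal_algebraMap hδ hI 0)
    (by simpa using extendVal_algebraMap hδ hI 1) (extendVal_add hI) (extendVal_mul hδ hI)

theorem extendValuation_algebraMap (hδ : δ ≠ 0) (hI : ∀ y ∈ I, δ ≤ v y) (r : R) :
    extendValuation v hδ hI (algebraMap R (AdicCompletion I R) r) = v r :=
  extendVal_algebraMap hδ hI r

theorem eq_extendValuation (hfg : I.FG) (hδ : δ ≠ 0) (hI : ∀ y ∈ I, δ ≤ v y)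
    (u : AddValuation (AdicCompletion I R) ℝ≥0∞)
    (hu : ∀ r, u (algebraMap R (AdicCompletion I R) r) = v r) :
    u = extendValuation v hδ hI := by
  have huI : ∀ y ∈ I.map (algebraMap R (AdicCompletion I R)), δ ≤ u y := fun y =>
    u.le_of_mem_map _ fun r hr => (hu r).symm ▸ hI r hr
  ext x
  calc u x = ⨆ n : ℕ, min (u x) (n * δ) := by
        rw [ENNReal.iSup_min_natCast_mul hδ monotone_const, iSup_const]
    _ = extendVal v δ x := iSup_congr fun n => by
        rw [u.min_eq_min_of_le_map_sub (u.natCast_mul_le_of_mem_pow huI n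
          (by rw [← Ideal.map_pow]; exact sub_algebraMap_approx_mem hfg x n)), hu]
        rfl

end Extension

end AdicCompletion

open IsLocalRing in
/-- Let `(R,𝔪)` be a Noetherian local ring and `w` a valuation on `R`, nonnegative on
`R` and strictly positive on `𝔪`.  Then `w` is continuous for the `𝔪`-adic topology on
`R` (values in `[0,∞]` with the order topology), and `w` extends uniquely to a local
valuation on the `𝔪`-adic completion of `R`. -/
theorem local_valuation_continuous_and_extends {R : Type*} [CommRing R]
    [IsNoetherianRing R] [IsLocalRing R] (w : R → ENNReal)
    (hmul : ∀ f g : R, w (f * g) = w f + w g)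
    (hzero : w 0 = ⊤) (hone : w 1 = 0)
    (hadd : ∀ f g : R, min (w f) (w g) ≤ w (f + g))
    (hpos : ∀ f ∈ maximalIdeal R, 0 < w f) :
    (@Continuous R ENNReal ((maximalIdeal R).adicTopology) _ w) ∧
    (∃! whext : AdicCompletion (maximalIdeal R) R → ENNReal,
      (∀ f g, whext (f * g) = whext f + whext g) ∧ whext 0 = ⊤ ∧ whext 1 = 0 ∧
      (∀ f g, min (whext f) (whext g) ≤ whext (f + g)) ∧
      (∀ f ∈ (maximalIdeal R).map
          (algebraMap R (AdicCompletion (maximalIdeal R) R)), 0 < whext f) ∧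
      ∀ r : R, whext (algebraMap R (AdicCompletion (maximalIdeal R) R) r) = w r) := by
  let v : AddValuation R ℝ≥0∞ := .of w hzero hone hadd hmul
  have hfg : (maximalIdeal R).FG := IsNoetherian.noetherian _
  obtain ⟨δ, hδpos, hδI⟩ := v.exists_pos_le_of_fg hfg hpos
  have hδ := hδpos.ne'
  let W := AdicCompletion.extendValuation v hδ hδI
  have hW := AdicCompletion.extendValuation_algebraMap hδ hδI
  refine ⟨v.continuous_adicTopology hδ hδI, W,
    ⟨W.map_mul, W.map_zero, W.map_one, W.map_add, fun f hf => ?_, hW⟩, ?_⟩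
  · exact hδpos.trans_le
      (W.le_of_mem_map _ (fun r hr => (hW r).symm ▸ hδI r hr) hf)
  · rintro u ⟨humul, hu0, hu1, huadd, -, hu⟩
    exact congrArg DFunLike.coe
      (AdicCompletion.eq_extendValuation hfg hδ hδI (.of u hu0 hu1 huadd humul) hu)
end

section
/- Let (R, 𝔪) ⊆ (S, 𝔫) be local domains with 𝔫 ∩ R = 𝔪, S integral over R, and let I ⊆ S be the set of elements x satisfying a monic integral dependence relation xⁿ + r₁xⁿ⁻¹ + ⋯ + rₙ = 0 with all rᵢ ∈ 𝔪. Then I is an ideal of S equal to 𝔫 (every element of 𝔫 has a power in I, and I ∩ R = 𝔪, I is 𝔫-primary). -/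
open IsLocalRing Polynomial

/-!
Every prime of `S` containing `𝔪S` contracts to `𝔪`, so it is maximal by integrality, i.e. it is
`𝔫`; hence `𝔫` is the radical of `𝔪S`. For `x ∈ 𝔫` some power `xᵏ` lies in `𝔪S`, the determinant
trick makes `xᵏ` a root of a monic `f` with lower coefficients in `𝔪`, and `x` is a root of
`f(Xᵏ)`. Conversely such a relation of degree `n` puts `xⁿ` in `𝔪S ⊆ 𝔫`.
-/

section

variable {R S : Type*} [CommRing R] [CommRing S] [Algebra R S]

theorem Ideal.IsPrime.mem_of_aeval_eq_zero_of_coeff_mem_comap {P : Ideal S} (hP : P.IsPrime)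
    {p : R[X]} (hmo : p.Monic) (hcoeff : ∀ i < p.natDegree, p.coeff i ∈ P.comap (algebraMap R S))
    {x : S} (hx : aeval x p = 0) : x ∈ P := by
  have hEis : p.IsWeaklyEisensteinAt (P.comap (algebraMap R S)) := ⟨hcoeff _⟩
  have hpow := hEis.pow_natDegree_le_of_aeval_zero_of_monic_mem_map hx hmo _ natDegree_map_le
  exact hP.mem_of_pow_mem _ (Ideal.map_comap_le hpow)

theorem IsLocalRing.maximalIdeal_le_radical_map_maximalIdeal [IsLocalRing R] [IsLocalRing S]
    [Algebra.IsIntegral R S] :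
    maximalIdeal S ≤ ((maximalIdeal R).map (algebraMap R S)).radical := by
  rw [Ideal.radical_eq_sInf]
  refine le_sInf fun J ⟨hle, hJ⟩ ↦ ?_
  have hcomap : J.comap (algebraMap R S) = maximalIdeal R :=
    ((maximalIdeal.isMaximal R).eq_of_le (Ideal.comap_ne_top _ hJ.ne_top)
      (Ideal.map_le_iff_le_comap.mp hle)).symm
  have : J.IsMaximal :=
    Ideal.isMaximal_of_isIntegral_of_isMaximal_comap J (hcomap ▸ maximalIdeal.isMaximal R)
  exact (IsLocalRing.eq_maximalIdeal this).ge

theorem Polynomial.exists_monic_aeval_eq_zero_forall_mem_of_mem_radical_map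
    [Algebra.IsIntegral R S] [Nontrivial S] {I : Ideal R} {x : S}
    (hx : x ∈ (I.map (algebraMap R S)).radical) :
    ∃ p : R[X], p.Monic ∧ 0 < p.natDegree ∧ (∀ i < p.natDegree, p.coeff i ∈ I) ∧
      aeval x p = 0 := by
  obtain ⟨k, hk⟩ := hx
  have hk' : x ^ (k + 1) ∈ I.map (algebraMap R S) := by
    rw [pow_succ]
    exact Ideal.mul_mem_right _ _ hk
  obtain ⟨q, hmo, hq, hcoeff⟩ := exists_monic_aeval_eq_zero_forall_mem_of_mem_map hk'
  have hq1 : q ≠ 1 := by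
    rintro rfl
    simp at hq
  refine ⟨expand R (k + 1) q, hmo.expand k.succ_pos, ?_, fun i hi ↦ ?_, ?_⟩
  · rw [natDegree_expand]
    exact Nat.mul_pos (hmo.natDegree_pos.mpr hq1) k.succ_pos
  · rw [coeff_expand k.succ_pos]
    split_ifs with hdvd
    · refine hcoeff _ fun h ↦ hi.ne ?_
      rw [natDegree_expand, ← h, Nat.div_mul_cancel hdvd]
    · exact I.zero_mem
  · rw [expand_aeval, hq]

end

theorem integral_dependence_ideal_eq_maximalIdeal_general {R S : Type*} [CommRing R]
    [CommRing S] [IsLocalRing R] [IsLocalRing S]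
    [Algebra R S] [Algebra.IsIntegral R S]
    (hlying : (maximalIdeal S).comap (algebraMap R S) = maximalIdeal R) :
    {x : S | ∃ p : Polynomial R, p.Monic ∧ 0 < p.natDegree ∧
        (∀ i < p.natDegree, p.coeff i ∈ maximalIdeal R) ∧ Polynomial.aeval x p = 0}
      = (maximalIdeal S : Set S) ∧
    (algebraMap R S) ⁻¹' {x : S | ∃ p : Polynomial R, p.Monic ∧ 0 < p.natDegree ∧
        (∀ i < p.natDegree, p.coeff i ∈ maximalIdeal R) ∧ Polynomial.aeval x p = 0}
      = (maximalIdeal R : Set R) := by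
  have hI : {x : S | ∃ p : Polynomial R, p.Monic ∧ 0 < p.natDegree ∧
      (∀ i < p.natDegree, p.coeff i ∈ maximalIdeal R) ∧ Polynomial.aeval x p = 0}
      = (maximalIdeal S : Set S) := by
    refine Set.Subset.antisymm ?_ fun x hx ↦ ?_
    · rintro x ⟨p, hmo, -, hcoeff, hx⟩
      exact (maximalIdeal.isMaximal S).isPrime.mem_of_aeval_eq_zero_of_coeff_mem_comap hmo
        (hlying ▸ hcoeff) hx
    · exact exists_monic_aeval_eq_zero_forall_mem_of_mem_radical_map
        (maximalIdeal_le_radical_map_maximalIdeal hx)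
  refine ⟨hI, ?_⟩
  rw [hI, ← hlying]
  rfl

/-- Let `(R,𝔪) ⊆ (S,𝔫)` be local domains with `𝔫 ∩ R = 𝔪` and `S` integral over `R`,
and let `I ⊆ S` be the set of elements satisfying a monic integral dependence relation
all of whose lower coefficients lie in `𝔪`.  Then `I` is an ideal of `S`, equal to `𝔫`,
and `I ∩ R = 𝔪`. -/
theorem integral_dependence_ideal_eq_maximalIdeal {R S : Type*} [CommRing R]
    [CommRing S] [IsDomain R] [IsDomain S] [IsLocalRing R] [IsLocalRing S]
    [Algebra R S] [Algebra.IsIntegral R S]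
    (hinj : Function.Injective (algebraMap R S))
    (hlying : (maximalIdeal S).comap (algebraMap R S) = maximalIdeal R) :
    {x : S | ∃ p : Polynomial R, p.Monic ∧ 0 < p.natDegree ∧
        (∀ i < p.natDegree, p.coeff i ∈ maximalIdeal R) ∧ Polynomial.aeval x p = 0}
      = (maximalIdeal S : Set S) ∧
    (algebraMap R S) ⁻¹' {x : S | ∃ p : Polynomial R, p.Monic ∧ 0 < p.natDegree ∧
        (∀ i < p.natDegree, p.coeff i ∈ maximalIdeal R) ∧ Polynomial.aeval x p = 0}
      = (maximalIdeal R : Set R) :=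
  integral_dependence_ideal_eq_maximalIdeal_general hlying
end

section
/- Let X₁, …, X_l be independent variables and n ∈ ℕ*. Then the product ∏ (c₁X₁ + ⋯ + c_lX_l), taken over all l-tuples (c₁,…,c_l) of n-th roots of unity in ℂ, equals Q(X₁ⁿ, …, X_lⁿ) for some homogeneous polynomial Q ∈ ℤ[X₁,…,X_l] of degree n^{l−1} (total degree n^l in the original variables), and for each i the monomial Xᵢ^{n^{l−1}} appears in Q with nonzero coefficient. -/
open MvPolynomial

section AuxProdRoots
open Finset
namespace ProdRootsAux

variable {R : Type*} [CommSemiring R] {l n : ℕ}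

lemma prod_support_eq (a : Fin l → R) (d : Fin l →₀ ℕ) :
    ∏ k ∈ d.support, a k ^ d k = ∏ k, a k ^ d k :=
  Finset.prod_subset (Finset.subset_univ _)
    (fun x _ hx => by rw [Finsupp.notMem_support_iff.mp hx, pow_zero])

lemma aeval_C_mul_X_monomial (a : Fin l → R) (d : Fin l →₀ ℕ) (b : R) :
    aeval (fun k => (MvPolynomial.C (a k) : MvPolynomial (Fin l) R) * MvPolynomial.X k)
      (monomial d b) = monomial d (b * ∏ k, a k ^ d k) := by
  rw [MvPolynomial.aeval_monomial, MvPolynomial.monomial_eq, ← prod_support_eq a d]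
  show (MvPolynomial.C b : MvPolynomial (Fin l) R)
        * ∏ k ∈ d.support, (MvPolynomial.C (a k) * MvPolynomial.X k) ^ d k
      = MvPolynomial.C (b * ∏ k ∈ d.support, a k ^ d k)
        * ∏ k ∈ d.support, MvPolynomial.X k ^ d k
  simp only [mul_pow, ← MvPolynomial.C_pow, Finset.prod_mul_distrib, map_mul, map_prod]
  ring

lemma coeff_aeval_C_mul_X (a : Fin l → R) (p : MvPolynomial (Fin l) R) (m : Fin l →₀ ℕ) :
    MvPolynomial.coeff m
        (aeval (fun k => (MvPolynomial.C (a k) : MvPolynomial (Fin l) R) * MvPolynomial.X k) p)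
      = (∏ k, a k ^ m k) * MvPolynomial.coeff m p := by
  induction p using MvPolynomial.induction_on' with
  | monomial d b =>
      rw [aeval_C_mul_X_monomial, MvPolynomial.coeff_monomial, MvPolynomial.coeff_monomial]
      split
      · next h => subst h; ring
      · ring
  | add p q hp hq => rw [map_add, MvPolynomial.coeff_add, hp, hq, MvPolynomial.coeff_add, mul_add]

lemma smul_finsupp_injective (hn : n ≠ 0) :
    Function.Injective (fun m : Fin l →₀ ℕ => n • m) := by
  intro m₁ m₂ h
  ext j
  have := DFunLike.congr_fun h j
  simp only [Finsupp.smul_apply, smul_eq_mul] at this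
  exact Nat.eq_of_mul_eq_mul_left (Nat.pos_of_ne_zero hn) this

lemma eval₂_pow_monomial (hn : n ≠ 0) (d : Fin l →₀ ℕ) (b : ℤ) :
    MvPolynomial.eval₂
      ((MvPolynomial.C : ℂ →+* MvPolynomial (Fin l) ℂ).comp (Int.castRingHom ℂ))
      (fun j : Fin l => MvPolynomial.X j ^ n) (monomial d b) = monomial (n • d) (b : ℂ) := by
  rw [MvPolynomial.eval₂_monomial, MvPolynomial.monomial_eq]
  have hsupp : (n • d).support = d.support := by
    ext j
    simp [Finsupp.mem_support_iff, Finsupp.smul_apply, smul_eq_mul, hn]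
  show (MvPolynomial.C ((b : ℂ)) : MvPolynomial (Fin l) ℂ)
        * ∏ k ∈ d.support, (MvPolynomial.X k ^ n) ^ d k
      = MvPolynomial.C ((b : ℂ)) * ∏ k ∈ (n • d).support, MvPolynomial.X k ^ (n • d) k
  rw [hsupp]
  congr 1
  refine Finset.prod_congr rfl fun k _ => ?_
  rw [← pow_mul]
  congr 1

lemma coeff_eval₂_pow (hn : n ≠ 0) (Q : MvPolynomial (Fin l) ℤ) (m : Fin l →₀ ℕ) :
    MvPolynomial.coeff (n • m) (MvPolynomial.eval₂
      ((MvPolynomial.C : ℂ →+* MvPolynomial (Fin l) ℂ).comp (Int.castRingHom ℂ))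
      (fun j : Fin l => MvPolynomial.X j ^ n) Q) = ((MvPolynomial.coeff m Q : ℤ) : ℂ) := by
  induction Q using MvPolynomial.induction_on' with
  | monomial d b =>
      rw [eval₂_pow_monomial hn, MvPolynomial.coeff_monomial, MvPolynomial.coeff_monomial]
      by_cases h : d = m
      · subst h; simp
      · rw [if_neg h, if_neg (fun hc => h (smul_finsupp_injective hn hc))]
        simp
  | add p q hp hq => simp [MvPolynomial.eval₂_add, MvPolynomial.coeff_add, hp, hq]

lemma weight_one_single (i : Fin l) (N : ℕ) :
    Finsupp.weight (1 : Fin l → ℕ) (Finsupp.single i N) = N := by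
  rw [Finsupp.weight_apply, Finsupp.sum_single_index] <;> simp

lemma eval_single_of_homogeneous {N : ℕ} (hN : N ≠ 0) (p : MvPolynomial (Fin l) ℂ)
    (hp : p.IsHomogeneous N) (i : Fin l) :
    MvPolynomial.eval (fun j => if j = i then (1:ℂ) else 0) p
      = MvPolynomial.coeff (Finsupp.single i N) p := by
  rw [MvPolynomial.eval_eq]
  rw [Finset.sum_eq_single (Finsupp.single i N)]
  · have : ∏ j ∈ (Finsupp.single i N).support,
          (if j = i then (1:ℂ) else 0) ^ (Finsupp.single i N) j = 1 := by
      rw [Finsupp.support_single_ne_zero i hN]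
      simp
    rw [this, mul_one]
  · intro d hd hne
    have hmem := MvPolynomial.mem_support_iff.mp hd
    have hex : ∃ j, j ≠ i ∧ d j ≠ 0 := by
      by_contra hcon
      push_neg at hcon
      apply hne
      have hdi : d = Finsupp.single i (d i) := by
        ext j
        by_cases hj : j = i
        · subst hj; simp
        · simp [Finsupp.single_apply, Ne.symm hj, hcon j hj]
      have hw : Finsupp.weight (1 : Fin l → ℕ) d = N := hp hmem
      rw [hdi] at hw ⊢
      rw [weight_one_single] at hw
      rw [hw]
    obtain ⟨j, hji, hdj⟩ := hex
    rw [Finset.prod_eq_zero (Finsupp.mem_support_iff.mpr hdj), mul_zero]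
    rw [if_neg hji]
    exact zero_pow hdj
  · intro h
    rw [MvPolynomial.notMem_support_iff.mp h, zero_mul]

end ProdRootsAux

namespace Part2

open ProdRootsAux

lemma map_prod_linear {l n : ℕ} {F E : Type*} [Field F] [Field E] (f : F →+* E) (hn : 0 < n)
    (hsurj : ∀ y ∈ Polynomial.nthRootsFinset n (1 : E), ∃ x ∈ Polynomial.nthRootsFinset n (1 : F), f x = y) :
    MvPolynomial.map f
      (∏ c ∈ Fintype.piFinset (fun _ : Fin l => Polynomial.nthRootsFinset n (1 : F)),
        ∑ j : Fin l, MvPolynomial.C (c j) * MvPolynomial.X j)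
    = ∏ c ∈ Fintype.piFinset (fun _ : Fin l => Polynomial.nthRootsFinset n (1 : E)),
        ∑ j : Fin l, MvPolynomial.C (c j) * MvPolynomial.X j := by
  rw [map_prod]
  refine Finset.prod_bij (fun c _ => fun j => f (c j)) ?_ ?_ ?_ ?_
  · intro c hc
    rw [Fintype.mem_piFinset] at hc ⊢
    intro j
    rw [Polynomial.mem_nthRootsFinset hn _] at *
    rw [← map_pow, (Polynomial.mem_nthRootsFinset hn _).mp (hc j), map_one]
  · intro c1 h1 c2 h2 h
    funext j
    exact f.injective (congr_fun h j)
  · intro c' hc'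
    rw [Fintype.mem_piFinset] at hc'
    choose x hx hfx using fun j => hsurj (c' j) (hc' j)
    exact ⟨x, Fintype.mem_piFinset.mpr hx, funext hfx⟩
  · intro c hc
    rw [map_sum]
    refine Finset.sum_congr rfl fun j _ => ?_
    rw [map_mul, MvPolynomial.map_C, MvPolynomial.map_X]

set_option synthInstance.maxHeartbeats 400000 in
lemma coeff_int (l n : ℕ) (hn : 0 < n) (m : Fin l →₀ ℕ) :
    ∃ z : ℤ, MvPolynomial.coeff m
      (∏ c ∈ Fintype.piFinset (fun _ : Fin l => Polynomial.nthRootsFinset n (1 : ℂ)),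
        ∑ j : Fin l, MvPolynomial.C (c j) * MvPolynomial.X j) = (z : ℂ) := by
  haveI : NeZero n := ⟨hn.ne'⟩
  set n' : ℕ+ := ⟨n, hn⟩ with hn'
  let K := CyclotomicField n ℚ
  haveI : IsCyclotomicExtension {n} ℚ K :=
    CyclotomicField.isCyclotomicExtension n ℚ
  haveI : IsGalois ℚ K := IsCyclotomicExtension.isGalois {n} ℚ K
  haveI : FiniteDimensional ℚ K := IsCyclotomicExtension.finiteDimensional {n} ℚ K
  let φ : K →ₐ[ℚ] ℂ := IsAlgClosed.lift
  have hζK : IsPrimitiveRoot (IsCyclotomicExtension.zeta n ℚ K) n :=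
    IsCyclotomicExtension.zeta_spec n ℚ K
  set PK : MvPolynomial (Fin l) K :=
    ∏ c ∈ Fintype.piFinset (fun _ : Fin l => Polynomial.nthRootsFinset n (1 : K)),
      ∑ j : Fin l, MvPolynomial.C (c j) * MvPolynomial.X j with hPK
  have hφζ : IsPrimitiveRoot (φ (IsCyclotomicExtension.zeta n ℚ K)) n :=
    hζK.map_of_injective (φ : K →+* ℂ).injective
  have hmap : MvPolynomial.map (φ : K →+* ℂ) PK
      = ∏ c ∈ Fintype.piFinset (fun _ : Fin l => Polynomial.nthRootsFinset n (1 : ℂ)),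
        ∑ j : Fin l, MvPolynomial.C (c j) * MvPolynomial.X j := by
    refine map_prod_linear _ hn ?_
    intro y hy
    obtain ⟨i, -, hi⟩ := hφζ.eq_pow_of_pow_eq_one ((Polynomial.mem_nthRootsFinset hn _).mp hy)
    refine ⟨IsCyclotomicExtension.zeta n ℚ K ^ i, ?_, by rw [map_pow]; exact hi⟩
    rw [Polynomial.mem_nthRootsFinset hn _, ← pow_mul, mul_comm, pow_mul, hζK.pow_eq_one, one_pow]
  -- the coefficient in K
  set x : K := MvPolynomial.coeff m PK with hx
  -- fixed by every automorphism
  have hfix : ∀ σ : K ≃ₐ[ℚ] K, σ x = x := by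
    intro σ
    have : MvPolynomial.map (σ : K →+* K) PK = PK := by
      refine map_prod_linear _ hn ?_
      intro y hy
      refine ⟨σ.symm y, ?_, σ.apply_symm_apply y⟩
      rw [Polynomial.mem_nthRootsFinset hn _] at hy ⊢
      rw [← map_pow, hy, map_one]
    calc σ x = MvPolynomial.coeff m (MvPolynomial.map (σ : K →+* K) PK) := by
          rw [MvPolynomial.coeff_map]; rfl
      _ = x := by rw [this]
  -- hence in ℚ
  have hbot : IntermediateField.fixedField (⊤ : Subgroup (K ≃ₐ[ℚ] K)) = ⊥ := by
    rw [← IntermediateField.fixingSubgroup_bot (F := ℚ) (E := K)]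
    exact IsGalois.fixedField_fixingSubgroup ⊥
  have hxbot : x ∈ (⊥ : IntermediateField ℚ K) := by
    rw [← hbot]
    exact fun g => hfix g.1
  rw [IntermediateField.mem_bot] at hxbot
  obtain ⟨q, hq⟩ := hxbot
  -- x is integral over ℤ
  have hint : IsIntegral ℤ x := by
    have hroot : ∀ y : K, y ^ n = 1 → IsIntegral ℤ y := by
      intro y hy
      refine ⟨Polynomial.X ^ n - Polynomial.C 1, Polynomial.monic_X_pow_sub_C 1 hn.ne', ?_⟩
      simp [hy]
    have hmem : PK ∈ (MvPolynomial.map (algebraMap (integralClosure ℤ K) K)).range := by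
      rw [hPK]
      apply Subring.prod_mem
      intro c hc
      refine ⟨∑ j : Fin l, MvPolynomial.C
        (⟨c j, hroot _ ((Polynomial.mem_nthRootsFinset hn _).mp
          (Fintype.mem_piFinset.mp hc j))⟩ : integralClosure ℤ K) * MvPolynomial.X j, ?_⟩
      rw [map_sum]
      refine Finset.sum_congr rfl fun j _ => ?_
      rw [map_mul, MvPolynomial.map_C, MvPolynomial.map_X]
      rfl
    obtain ⟨W, hW⟩ := hmem
    have : x = algebraMap (integralClosure ℤ K) K (MvPolynomial.coeff m W) := by
      rw [hx, ← hW, MvPolynomial.coeff_map]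
    rw [this]
    exact (MvPolynomial.coeff m W).2
  rw [← hq] at hint
  have hqint : IsIntegral ℤ q := (isIntegral_algebraMap_iff (algebraMap ℚ K).injective).mp hint
  obtain ⟨z, hz⟩ := IsIntegrallyClosed.isIntegral_iff.mp hqint
  refine ⟨z, ?_⟩
  have : MvPolynomial.coeff m (MvPolynomial.map (φ : K →+* ℂ) PK) = φ x := by
    rw [MvPolynomial.coeff_map]; rfl
  rw [← hmap, this, ← hq, φ.commutes]
  rw [← hz]
  norm_num

end Part2

end AuxProdRoots

open ProdRootsAux

/-- The product of the linear forms `c₁X₁ + ⋯ + c_lX_l` over all `l`-tuples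
`(c₁,…,c_l)` of `n`-th roots of unity in `ℂ` is a polynomial `Q(X₁ⁿ,…,X_lⁿ)` in the
`n`-th powers of the variables, where `Q` has integer coefficients, is homogeneous (of
degree `n^(l-1)`), and contains each pure power `Xᵢ^{n^(l-1)}` with nonzero
coefficient. -/
theorem prod_rootsOfUnity_linear_forms (l n : ℕ) (hn : 0 < n) :
    ∃ Q : MvPolynomial (Fin l) ℤ,
      (∏ c ∈ Fintype.piFinset (fun _ : Fin l => Polynomial.nthRootsFinset n (1 : ℂ)),
          ∑ j : Fin l, MvPolynomial.C (c j) * MvPolynomial.X j)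
        = MvPolynomial.eval₂
            ((MvPolynomial.C : ℂ →+* MvPolynomial (Fin l) ℂ).comp (Int.castRingHom ℂ))
            (fun j : Fin l => MvPolynomial.X j ^ n) Q ∧
      Q.IsHomogeneous (n ^ (l - 1)) ∧
      ∀ i : Fin l, Q.coeff (Finsupp.single i (n ^ (l - 1))) ≠ 0 := by
  classical
  rcases Nat.eq_zero_or_pos l with hl | hl
  · subst hl
    refine ⟨0, ?_, MvPolynomial.isHomogeneous_zero _ _ _, fun i => i.elim0⟩
    rw [MvPolynomial.eval₂_zero]
    refine Finset.prod_eq_zero (i := fun _ : Fin 0 => (1:ℂ))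
      (Fintype.mem_piFinset.mpr fun j => j.elim0) ?_
    simp
  have hζ : IsPrimitiveRoot (Complex.exp (2 * Real.pi * Complex.I / n)) n :=
    Complex.isPrimitiveRoot_exp n hn.ne'
  set ζ : ℂ := Complex.exp (2 * Real.pi * Complex.I / n) with hζdef
  set P : MvPolynomial (Fin l) ℂ :=
    ∏ c ∈ Fintype.piFinset (fun _ : Fin l => Polynomial.nthRootsFinset n (1 : ℂ)),
      ∑ j : Fin l, MvPolynomial.C (c j) * MvPolynomial.X j with hP
  have hcard : (Fintype.piFinset (fun _ : Fin l => Polynomial.nthRootsFinset n (1 : ℂ))).card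
      = n ^ l := by
    rw [Fintype.card_piFinset]
    simp [hζ.card_nthRootsFinset]
  have hPhom : P.IsHomogeneous (n ^ l) := by
    have := MvPolynomial.IsHomogeneous.prod
      (Fintype.piFinset fun _ : Fin l => Polynomial.nthRootsFinset n (1 : ℂ))
      (fun c => ∑ j : Fin l, MvPolynomial.C (c j) * MvPolynomial.X j) (fun _ => 1)
      (fun c _ => MvPolynomial.IsHomogeneous.sum Finset.univ
        (fun j => MvPolynomial.C (c j) * MvPolynomial.X j) 1
        (fun j _ => MvPolynomial.isHomogeneous_C_mul_X _ _))
    rw [Finset.sum_const, hcard, smul_eq_mul, mul_one] at this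
    exact this
  have hdvd : ∀ m, MvPolynomial.coeff m P ≠ 0 → ∀ j, n ∣ m j := by
    intro m hm j
    set a : Fin l → ℂ := fun k => if k = j then ζ else 1 with ha
    have hak : ∀ k, a k ≠ 0 := by
      intro k; rw [ha]; dsimp only; split
      · exact hζ.ne_zero hn.ne'
      · exact one_ne_zero
    have hinv : MvPolynomial.aeval
        (fun k => (MvPolynomial.C (a k) : MvPolynomial (Fin l) ℂ) * MvPolynomial.X k) P = P := by
      rw [hP, map_prod]
      refine Finset.prod_bij (fun c _ => fun k => c k * a k) ?_ ?_ ?_ ?_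
      · intro c hc
        rw [Fintype.mem_piFinset] at hc ⊢
        intro k
        rw [Polynomial.mem_nthRootsFinset hn _, mul_pow,
          (Polynomial.mem_nthRootsFinset hn _).mp (hc k), one_mul]
        rw [ha]; dsimp only; split
        · exact hζ.pow_eq_one
        · exact one_pow n
      · intro c1 h1 c2 h2 h
        funext k
        exact mul_right_cancel₀ (hak k) (congr_fun h k)
      · intro c' hc'
        refine ⟨fun k => c' k * (a k)⁻¹, ?_, ?_⟩
        · rw [Fintype.mem_piFinset] at hc' ⊢
          intro k
          rw [Polynomial.mem_nthRootsFinset hn _, mul_pow,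
            (Polynomial.mem_nthRootsFinset hn _).mp (hc' k), one_mul, inv_pow]
          rw [ha]; dsimp only; split
          · rw [hζ.pow_eq_one, inv_one]
          · simp
        · funext k
          show c' k * (a k)⁻¹ * a k = c' k
          rw [mul_assoc, inv_mul_cancel₀ (hak k), mul_one]
      · intro c hc
        rw [map_sum]
        refine Finset.sum_congr rfl fun k _ => ?_
        rw [map_mul, MvPolynomial.aeval_C, MvPolynomial.aeval_X, ← mul_assoc]
        rw [MvPolynomial.algebraMap_eq, ← MvPolynomial.C_mul]
    have hcoeff := coeff_aeval_C_mul_X a P m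
    rw [hinv] at hcoeff
    have hprod : (∏ k, a k ^ m k) = ζ ^ m j := by
      rw [ha]
      calc (∏ k, (if k = j then ζ else 1) ^ m k)
          = ∏ k, (if k = j then ζ ^ m k else 1) :=
            Finset.prod_congr rfl fun k _ => by split <;> simp
        _ = ζ ^ m j := by
            rw [Finset.prod_ite_eq' Finset.univ j (fun k => ζ ^ m k)]
            simp
    rw [hprod] at hcoeff
    have hone : ζ ^ m j = 1 := by
      have h2 : (ζ ^ m j - 1) * MvPolynomial.coeff m P = 0 := by
        rw [sub_mul, ← hcoeff, one_mul, sub_self]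
      rcases mul_eq_zero.mp h2 with h | h
      · exact sub_eq_zero.mp h
      · exact absurd h hm
    exact (hζ.pow_eq_one_iff_dvd _).mp hone
  choose z hz using fun m => Part2.coeff_int l n hn m
  set dv : (Fin l →₀ ℕ) → (Fin l →₀ ℕ) :=
    fun m => Finsupp.mapRange (· / n) (Nat.zero_div n) m with hdv
  set Q : MvPolynomial (Fin l) ℤ :=
    ∑ m ∈ P.support, MvPolynomial.monomial (dv m) (z m) with hQdef
  have hnsmul : ∀ m ∈ P.support, n • dv m = m := by
    intro m hm
    ext j
    simp only [Finsupp.smul_apply, smul_eq_mul, hdv, Finsupp.mapRange_apply]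
    exact Nat.mul_div_cancel' (hdvd m (MvPolynomial.mem_support_iff.mp hm) j)
  have hψ : MvPolynomial.eval₂
      ((MvPolynomial.C : ℂ →+* MvPolynomial (Fin l) ℂ).comp (Int.castRingHom ℂ))
      (fun j : Fin l => MvPolynomial.X j ^ n) Q = P := by
    rw [hQdef, ← MvPolynomial.coe_eval₂Hom, map_sum]
    calc (∑ m ∈ P.support, MvPolynomial.eval₂Hom _ _ (MvPolynomial.monomial (dv m) (z m)))
        = ∑ m ∈ P.support, MvPolynomial.monomial (n • dv m) ((z m : ℂ)) := by
          refine Finset.sum_congr rfl fun m hm => ?_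
          rw [MvPolynomial.coe_eval₂Hom]
          exact eval₂_pow_monomial hn.ne' (dv m) (z m)
      _ = ∑ m ∈ P.support, MvPolynomial.monomial m (MvPolynomial.coeff m P) := by
          refine Finset.sum_congr rfl fun m hm => ?_
          rw [hnsmul m hm, ← hz m]
      _ = P := MvPolynomial.support_sum_monomial_coeff P
  have hQcoeff : ∀ m, ((MvPolynomial.coeff m Q : ℤ) : ℂ) = MvPolynomial.coeff (n • m) P := by
    intro m
    rw [← hψ, coeff_eval₂_pow hn.ne']
  have hpow : n ^ l = n * n ^ (l - 1) := by
    obtain ⟨k, rfl⟩ := Nat.exists_eq_succ_of_ne_zero hl.ne'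
    rw [Nat.succ_sub_one, pow_succ]
    ring
  refine ⟨Q, hψ.symm, ?_, ?_⟩
  · intro d hd
    have hne : MvPolynomial.coeff (n • d) P ≠ 0 := by
      rw [← hQcoeff]
      exact_mod_cast Int.cast_ne_zero.mpr hd
    have hw := hPhom hne
    have hsm : Finsupp.weight (1 : Fin l → ℕ) (n • d)
        = n * Finsupp.weight (1 : Fin l → ℕ) d := by
      rw [map_nsmul, smul_eq_mul]
    rw [hsm, hpow] at hw
    exact Nat.eq_of_mul_eq_mul_left hn hw
  · intro i
    have hkey : MvPolynomial.coeff (Finsupp.single i (n ^ l)) P ≠ 0 := by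
      rw [← eval_single_of_homogeneous (pow_ne_zero l hn.ne') P hPhom i]
      rw [hP, map_prod]
      rw [Finset.prod_ne_zero_iff]
      intro c hc
      have hev : MvPolynomial.eval (fun j => if j = i then (1:ℂ) else 0)
          (∑ j : Fin l, MvPolynomial.C (c j) * MvPolynomial.X j) = c i := by
        rw [map_sum]
        calc (∑ j : Fin l, MvPolynomial.eval _ (MvPolynomial.C (c j) * MvPolynomial.X j))
            = ∑ j : Fin l, (if j = i then c j else 0) := by
              refine Finset.sum_congr rfl fun k _ => ?_
              rw [map_mul, MvPolynomial.eval_C, MvPolynomial.eval_X]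
              split <;> simp
          _ = c i := by rw [Finset.sum_ite_eq' Finset.univ i (fun j => c j)]; simp
      rw [hev]
      intro h0
      have hci := (Polynomial.mem_nthRootsFinset hn _).mp (Fintype.mem_piFinset.mp hc i)
      rw [h0, zero_pow hn.ne'] at hci
      exact zero_ne_one hci
    intro h0
    apply hkey
    have hc := hQcoeff (Finsupp.single i (n ^ (l - 1)))
    rw [h0, Int.cast_zero] at hc
    have hsingle : n • Finsupp.single i (n ^ (l - 1)) = Finsupp.single i (n ^ l) := by
      rw [Finsupp.smul_single, smul_eq_mul, ← hpow]
    rw [hsingle] at hc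
    exact hc.symm
end
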